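/- arXiv:2005.08945 — 3 statements merged into one kernel-verified Lean document; each statement's English description precedes it below -/
import Mathlib

section
/- For every q > 0, every integer k ≥ 1, and every x > 0, one has ψ_q^{(k+2)}(x)·ψ_q^{(k)}(x) − (ψ_q^{(k+1)}(x))² > 0; consequently the function x ↦ ψ_q^{(k+1)}(x)/ψ_q^{(k)}(x) is increasing on (0, ∞). -/
open Real

noncomputable def qDigamma (q x : ℝ) : ℝ :=
  if q < 1 then
    -Real.log (1 - q) +
      Real.log q * ∑' n : ℕ, q ^ (((n : ℝ) + 1) * x) / (1 - q ^ ((n : ℝ) + 1))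
  else if 1 < q then
    -Real.log (q - 1) +
      Real.log q *
        (x - 1 / 2 - ∑' n : ℕ, q ^ (-(((n : ℝ) + 1) * x)) / (1 - q ^ (-((n : ℝ) + 1))))
  else
    deriv (fun y : ℝ => Real.log (Real.Gamma y)) x

open Set Filter Topology

/-!
For `q ≠ 1`, `ψ_q` is an affine function of nonnegative slope plus a Dirichlet series
`∑ cₙ e^{-aₙ x}` with `cₙ < 0` and `aₙ = (n + 1) |log q|`. For `q = 1`, differentiating the
Euler–Gauss limit of `log Γ` gives `ψ(x) = -γ + ∑ (1/(n + 1) - 1/(x + n))`. Differentiating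
termwise, `(-1)^(k+1) ψ_q^{(k)} = M_k` for `k ≥ 1`, where `M_k = ∑ |cₙ| aₙ^k e^{-aₙ x}` (plus the
slope if `k = 1`), resp. `M_k = k! ∑ (x + n)^{-(k+1)}`. Cauchy–Schwarz for these positive weights,
strict because the nodes `aₙ`, resp. `1/(x + n)`, are not all equal, gives the Turán inequality
`M_{k+1}² < M_{k+2} M_k` (for `q = 1` together with `(k+1)!² ≤ (k+2)! k!`). Finally
`ψ^{(k+2)} ψ^{(k)} - (ψ^{(k+1)})² = M_{k+2} M_k - M_{k+1}²` is the numerator of the derivative of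
`ψ^{(k+1)}/ψ^{(k)}`.
-/

theorem sq_tsum_mul_lt_tsum_sq_mul_mul_tsum {ι : Type*} {t u : ι → ℝ} (hu : ∀ n, 0 ≤ u n)
    {i j : ι} (hi : 0 < u i) (hj : 0 < u j) (ht : t i ≠ t j) (hsu : Summable u)
    (hstu : Summable fun n => t n * u n) (hst2u : Summable fun n => t n ^ 2 * u n) :
    (∑' n, t n * u n) ^ 2 < (∑' n, t n ^ 2 * u n) * ∑' n, u n := by
  set S := ∑' n, u n
  set B := ∑' n, t n * u n
  set C := ∑' n, t n ^ 2 * u n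
  have hS : 0 < S := hsu.tsum_pos hu i hi
  set r := B / S
  -- the weighted variance of `t` about its mean `r`
  have hvar : HasSum (fun n => u n * (t n - r) ^ 2) (C - 2 * r * B + r ^ 2 * S) := by
    refine ((hst2u.hasSum.sub (hstu.hasSum.mul_left (2 * r))).add
      (hsu.hasSum.mul_left (r ^ 2))).congr_fun fun n => ?_
    ring
  obtain ⟨l, hl, htl⟩ : ∃ l, 0 < u l ∧ t l ≠ r := by
    by_contra! h
    exact ht ((h i hi).trans (h j hj).symm)
  have hpos : 0 < C - 2 * r * B + r ^ 2 * S := by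
    rw [← hvar.tsum_eq]
    exact hvar.summable.tsum_pos (fun n => mul_nonneg (hu n) (sq_nonneg _)) l
      (mul_pos hl (pow_two_pos_of_ne_zero (sub_ne_zero.mpr htl)))
  have : C - 2 * r * B + r ^ 2 * S = (C * S - B ^ 2) / S := by
    simp only [r]
    field_simp
    ring
  rw [this, div_pos_iff_of_pos_right hS] at hpos
  linarith

section TermwiseDeriv

variable {ι : Type*} {g : ℕ → ι → ℝ → ℝ}
  (hg : ∀ m n, ∀ x > 0, HasDerivAt (g m n) (g (m + 1) n x) x)
  (hg₀ : ∀ x > 0, Summable fun n => g 0 n x)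
  (hbound : ∀ m, ∀ r > 0, ∃ u : ι → ℝ, Summable u ∧
    ∀ n, ∀ x ≥ r, |g (m + 1) n x| ≤ u n)

include hg₀ hbound in
theorem summable_of_abs_le_of_summable_zero (m : ℕ) {x : ℝ} (hx : 0 < x) :
    Summable fun n => g m n x := by
  cases m with
  | zero => exact hg₀ x hx
  | succ m =>
    obtain ⟨u, hu, hgu⟩ := hbound m x hx
    exact .of_norm_bounded hu fun n => hgu n x le_rfl

include hg hg₀ hbound

theorem hasDerivAt_tsum_of_abs_le (m : ℕ) {x : ℝ} (hx : 0 < x) :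
    HasDerivAt (fun y => ∑' n, g m n y) (∑' n, g (m + 1) n x) x := by
  obtain ⟨u, hu, hgu⟩ := hbound m (x / 2) (by positivity)
  have hx' : x ∈ Ioi (x / 2) := by simp only [mem_Ioi]; linarith
  exact hasDerivAt_tsum_of_isPreconnected hu isOpen_Ioi isPreconnected_Ioi
    (fun n y hy => hg m n y ((half_pos hx).trans hy)) (fun n y hy => hgu n y hy.le) hx'
    (summable_of_abs_le_of_summable_zero hg₀ hbound m hx) hx'

theorem eqOn_iteratedDeriv_of_eqOn_tsum {f : ℝ → ℝ} {C A : ℝ}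
    (hf : EqOn f (fun y => C + A * y + ∑' n, g 0 n y) (Ioi 0)) {k : ℕ} (hk : 1 ≤ k) :
    EqOn (iteratedDeriv k f) (fun y => (if k = 1 then A else 0) + ∑' n, g k n y) (Ioi 0) := by
  induction k, hk using Nat.le_induction with
  | base =>
    intro x hx
    have hF : HasDerivAt (fun y => C + A * y + ∑' n, g 0 n y) (A + ∑' n, g 1 n x) x := by
      simpa using (((hasDerivAt_id x).const_mul A).const_add C).fun_add
        (hasDerivAt_tsum_of_abs_le hg hg₀ hbound 0 hx)
    rw [iteratedDeriv_one, (hf.eventuallyEq_of_mem (isOpen_Ioi.mem_nhds hx)).deriv_eq, hF.deriv,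
      if_pos rfl]
  | succ k hk ih =>
    intro x hx
    have hF := (hasDerivAt_tsum_of_abs_le hg hg₀ hbound k hx).const_add (if k = 1 then A else 0)
    rw [iteratedDeriv_succ, (ih.eventuallyEq_of_mem (isOpen_Ioi.mem_nhds hx)).deriv_eq, hF.deriv]
    simp only [if_neg (show k + 1 ≠ 1 by omega), zero_add]

theorem differentiableAt_iteratedDeriv_of_eqOn_tsum {f : ℝ → ℝ} {C A : ℝ}
    (hf : EqOn f (fun y => C + A * y + ∑' n, g 0 n y) (Ioi 0)) {k : ℕ} (hk : 1 ≤ k) {x : ℝ}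
    (hx : 0 < x) : DifferentiableAt ℝ (iteratedDeriv k f) x :=
  ((hasDerivAt_tsum_of_abs_le hg hg₀ hbound k hx).const_add _).differentiableAt
    |>.congr_of_eventuallyEq ((eqOn_iteratedDeriv_of_eqOn_tsum hg hg₀ hbound hf hk).eventuallyEq_of_mem
      (isOpen_Ioi.mem_nhds hx))

end TermwiseDeriv

theorem strictMonoOn_div_of_hasDerivAt {f g f' g' : ℝ → ℝ} {s : Set ℝ} (hs : Convex ℝ s)
    (hso : IsOpen s) (hf : ∀ x ∈ s, HasDerivAt f (f' x) x) (hg : ∀ x ∈ s, HasDerivAt g (g' x) x)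
    (hg₀ : ∀ x ∈ s, g x ≠ 0) (h : ∀ x ∈ s, f x * g' x < f' x * g x) :
    StrictMonoOn (fun x => f x / g x) s := by
  have hd (x) (hx : x ∈ s) :
      HasDerivAt (fun x => f x / g x) ((f' x * g x - f x * g' x) / g x ^ 2) x :=
    (hf x hx).div (hg x hx) (hg₀ x hx)
  refine strictMonoOn_of_deriv_pos hs (fun x hx => (hd x hx).continuousAt.continuousWithinAt)
    fun x hx => ?_
  rw [hso.interior_eq] at hx
  rw [(hd x hx).deriv]
  exact div_pos (sub_pos.mpr (h x hx)) (pow_two_pos_of_ne_zero (hg₀ x hx))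

def HasAlternatingLogConvexDerivs (f : ℝ → ℝ) : Prop :=
  (∀ k ≥ 1, ∀ x > 0, DifferentiableAt ℝ (iteratedDeriv k f) x) ∧
  ∃ M : ℕ → ℝ → ℝ, ∀ k ≥ 1, ∀ x > 0,
    iteratedDeriv k f x = (-1) ^ (k + 1) * M k x ∧ 0 < M k x ∧
      M (k + 1) x ^ 2 < M (k + 2) x * M k x

namespace HasAlternatingLogConvexDerivs

variable {f : ℝ → ℝ} (hf : HasAlternatingLogConvexDerivs f) {k : ℕ} (hk : 1 ≤ k)
include hf hk

theorem hasDerivAt_iteratedDeriv {x : ℝ} (hx : 0 < x) :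
    HasDerivAt (iteratedDeriv k f) (iteratedDeriv (k + 1) f x) x := by
  rw [iteratedDeriv_succ]
  exact (hf.1 k hk x hx).hasDerivAt

theorem iteratedDeriv_ne_zero {x : ℝ} (hx : 0 < x) : iteratedDeriv k f x ≠ 0 := by
  obtain ⟨-, M, hM⟩ := hf
  obtain ⟨h₀, hpos, -⟩ := hM k hk x hx
  rw [h₀]
  exact mul_ne_zero (pow_ne_zero _ (by norm_num)) hpos.ne'

theorem turan {x : ℝ} (hx : 0 < x) :
    iteratedDeriv (k + 1) f x ^ 2 < iteratedDeriv (k + 2) f x * iteratedDeriv k f x := by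
  obtain ⟨-, M, hM⟩ := hf
  obtain ⟨h₀, -, hconv⟩ := hM k hk x hx
  rw [h₀, (hM (k + 1) (by omega) x hx).1, (hM (k + 2) (by omega) x hx).1,
    show k + 2 + 1 = k + 1 + 2 by ring, pow_add _ (k + 1) 2, pow_succ _ (k + 1)]
  rcases neg_one_pow_eq_or ℝ (k + 1) with hs | hs <;> rw [hs] <;> linarith

theorem strictMonoOn_div :
    StrictMonoOn (fun x => iteratedDeriv (k + 1) f x / iteratedDeriv k f x) (Ioi 0) :=
  strictMonoOn_div_of_hasDerivAt (convex_Ioi 0) isOpen_Ioi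
    (fun _ hx => hf.hasDerivAt_iteratedDeriv (by omega) hx)
    (fun _ hx => hf.hasDerivAt_iteratedDeriv hk hx) (fun _ hx => hf.iteratedDeriv_ne_zero hk hx)
    fun _ hx => by rw [← sq]; exact hf.turan hk hx

end HasAlternatingLogConvexDerivs

section ExpSeries

variable (c a : ℕ → ℝ)

noncomputable def expTerm (m n : ℕ) (y : ℝ) : ℝ := c n * (-a n) ^ m * exp (-(a n * y))

theorem hasDerivAt_expTerm (m n : ℕ) (x : ℝ) :
    HasDerivAt (expTerm c a m n) (expTerm c a (m + 1) n x) x := by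
  refine ((((hasDerivAt_id' x).const_mul (a n)).fun_neg.exp).const_mul
    (c n * (-a n) ^ m)).congr_deriv ?_
  simp only [expTerm, pow_succ]
  ring

variable {c a}

theorem abs_expTerm_le (ha : ∀ n, 0 ≤ a n) (m n : ℕ) {r x : ℝ} (hrx : r ≤ x) :
    |expTerm c a m n x| ≤ |c n| * a n ^ m * exp (-(a n * r)) := by
  rw [expTerm, abs_mul, abs_mul, abs_exp, abs_pow, abs_neg, abs_of_nonneg (ha n)]
  gcongr
  · have := ha n
    positivity
  · exact ha n

theorem sq_tsum_abs_mul_pow_mul_exp_lt (hc : ∀ n, c n ≠ 0) (ha : ∀ n, 0 < a n)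
    (ha₀₁ : a 0 ≠ a 1) (hsum : ∀ m, ∀ r > 0, Summable fun n => |c n| * a n ^ m * exp (-(a n * r)))
    (k : ℕ) {x : ℝ} (hx : 0 < x) :
    (∑' n, |c n| * a n ^ (k + 1) * exp (-(a n * x))) ^ 2 <
      (∑' n, |c n| * a n ^ (k + 2) * exp (-(a n * x))) *
        ∑' n, |c n| * a n ^ k * exp (-(a n * x)) := by
  set u := fun n => |c n| * a n ^ k * exp (-(a n * x))
  have hu (n) : 0 < u n := mul_pos (mul_pos (abs_pos.mpr (hc n)) (pow_pos (ha n) k)) (exp_pos _)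
  have h₁ (n) : a n * u n = |c n| * a n ^ (k + 1) * exp (-(a n * x)) := by
    simp only [u]
    ring
  have h₂ (n) : a n ^ 2 * u n = |c n| * a n ^ (k + 2) * exp (-(a n * x)) := by
    simp only [u]
    ring
  have hcs := sq_tsum_mul_lt_tsum_sq_mul_mul_tsum (fun n => (hu n).le) (hu 0) (hu 1) ha₀₁
    (hsum k x hx) (by simpa only [h₁] using hsum (k + 1) x hx)
    (by simpa only [h₂] using hsum (k + 2) x hx)
  rwa [tsum_congr h₁, tsum_congr h₂] at hcs

theorem hasAlternatingLogConvexDerivs_of_eqOn_expSeries {f : ℝ → ℝ} {C A : ℝ} (hA : 0 ≤ A)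
    (hc : ∀ n, c n < 0) (ha : ∀ n, 0 < a n) (ha₀₁ : a 0 ≠ a 1)
    (hsum : ∀ m, ∀ r > 0, Summable fun n => |c n| * a n ^ m * exp (-(a n * r)))
    (hf : EqOn f (fun y => C + A * y + ∑' n, expTerm c a 0 n y) (Ioi 0)) :
    HasAlternatingLogConvexDerivs f := by
  have hg (m n) (x : ℝ) (_ : x > 0) := hasDerivAt_expTerm c a m n x
  have hg₀ : ∀ x > 0, Summable fun n => expTerm c a 0 n x := fun x hx =>
    .of_norm_bounded (hsum 0 x hx) fun n => abs_expTerm_le (fun n => (ha n).le) 0 n le_rfl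
  have hbound : ∀ m, ∀ r > 0, ∃ u : ℕ → ℝ, Summable u ∧
      ∀ n, ∀ x ≥ r, |expTerm c a (m + 1) n x| ≤ u n := fun m r hr =>
    ⟨_, hsum (m + 1) r hr, fun n x hx => abs_expTerm_le (fun n => (ha n).le) (m + 1) n hx⟩
  refine ⟨fun k hk x hx => differentiableAt_iteratedDeriv_of_eqOn_tsum hg hg₀ hbound hf hk hx,
    fun k x => (if k = 1 then A else 0) + ∑' n, |c n| * a n ^ k * exp (-(a n * x)),
    fun k hk x hx => ⟨?_, ?_, ?_⟩⟩
  · have hterm (n) :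
        expTerm c a k n x = (-1) ^ (k + 1) * (|c n| * a n ^ k * exp (-(a n * x))) := by
      rw [expTerm, abs_of_neg (hc n), neg_pow, pow_succ]
      ring
    rw [eqOn_iteratedDeriv_of_eqOn_tsum hg hg₀ hbound hf hk hx]
    beta_reduce
    rw [tsum_congr hterm, tsum_mul_left, mul_add]
    split_ifs with h
    · simp [h]
    · simp
  · have : 0 < ∑' n, |c n| * a n ^ k * exp (-(a n * x)) :=
      (hsum k x hx).tsum_pos (fun n => by have := ha n; positivity) 0
        (mul_pos (mul_pos (abs_pos.mpr (hc 0).ne) (pow_pos (ha 0) k)) (exp_pos _))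
    beta_reduce
    split_ifs <;> linarith
  · have hcs := sq_tsum_abs_mul_pow_mul_exp_lt (fun n => (hc n).ne) ha ha₀₁ hsum k hx
    have : 0 ≤ (if k = 1 then A else 0) * ∑' n, |c n| * a n ^ (k + 2) * exp (-(a n * x)) :=
      mul_nonneg (by split_ifs <;> simp [hA]) (tsum_nonneg fun n => by have := ha n; positivity)
    beta_reduce
    simp only [if_neg (show k + 1 ≠ 1 by omega), if_neg (show k + 2 ≠ 1 by omega), zero_add]
    nlinarith

end ExpSeries

theorem summable_abs_mul_pow_mul_exp_of_abs_le {c : ℕ → ℝ} {K l : ℝ} (hcK : ∀ n, |c n| ≤ K)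
    (hl : 0 < l) (m : ℕ) {r : ℝ} (hr : 0 < r) :
    Summable fun n : ℕ => |c n| * ((n + 1) * l) ^ m * exp (-((n + 1) * l * r)) := by
  set ρ := exp (-(l * r))
  have hρ : ‖ρ‖ < 1 := by
    rw [norm_of_nonneg (exp_pos _).le, exp_lt_one_iff]
    nlinarith
  have hgeom : Summable fun n : ℕ => ((n : ℝ) + 1) ^ m * ρ ^ (n + 1) := by
    have := (summable_nat_add_iff 1).mpr (summable_pow_mul_geometric_of_norm_lt_one (R := ℝ) m hρ)
    exact this.congr fun n => by push_cast; rfl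
  refine .of_nonneg_of_le (fun n => by positivity) (fun n => ?_) (hgeom.mul_left (K * l ^ m))
  have hexp : exp (-((n + 1) * l * r)) = ρ ^ (n + 1) := by
    rw [← exp_nat_mul]
    push_cast
    ring_nf
  rw [hexp, mul_pow]
  have := hcK n
  have : 0 ≤ ((n : ℝ) + 1) ^ m * l ^ m * ρ ^ (n + 1) := by positivity
  nlinarith

theorem hasAlternatingLogConvexDerivs_of_eqOn_lambertSeries {f : ℝ → ℝ} {p b C A : ℝ}
    (hp₀ : 0 < p) (hp₁ : p < 1) (hb : b < 0) (hA : 0 ≤ A)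
    (hf : EqOn f (fun y => C + A * y +
      b * ∑' n : ℕ, p ^ (((n : ℝ) + 1) * y) / (1 - p ^ ((n : ℝ) + 1))) (Ioi 0)) :
    HasAlternatingLogConvexDerivs f := by
  have hlog : log p < 0 := log_neg hp₀ hp₁
  have hden (n : ℕ) : 0 < 1 - p ^ ((n : ℝ) + 1) :=
    sub_pos.mpr (rpow_lt_one hp₀.le hp₁ (by positivity))
  set c : ℕ → ℝ := fun n => b / (1 - p ^ ((n : ℝ) + 1))
  have hcK (n : ℕ) : |c n| ≤ -b / (1 - p) := by
    have : p ^ ((n : ℝ) + 1) ≤ p := by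
      simpa using rpow_le_rpow_of_exponent_ge hp₀ hp₁.le (by simp : (1 : ℝ) ≤ n + 1)
    rw [abs_div, abs_of_neg hb, abs_of_pos (hden n)]
    gcongr
    linarith
  refine hasAlternatingLogConvexDerivs_of_eqOn_expSeries (c := c) (a := fun n => (n + 1) * -log p)
    (C := C) hA (fun n => div_neg_of_neg_of_pos hb (hden n))
    (fun n => mul_pos (by positivity) (neg_pos.mpr hlog)) (by norm_num; linarith)
    (fun m r hr => summable_abs_mul_pow_mul_exp_of_abs_le hcK (neg_pos.mpr hlog) m hr)
    (hf.trans fun y _ => ?_)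
  simp only [expTerm, pow_zero, mul_one, ← tsum_mul_left, c]
  congr 2 with n
  rw [rpow_def_of_pos hp₀]
  ring_nf

open Nat in
/-- `polygammaTerm m n` is the `m`-th derivative of the `n`-th term of
`ψ(y) + γ = ∑ (1/(n + 1) - 1/(y + n))`. -/
noncomputable def polygammaTerm : ℕ → ℕ → ℝ → ℝ
  | 0, n, y => ((n : ℝ) + 1)⁻¹ - (y + n)⁻¹
  | m + 1, n, y => (-1) ^ m * (m + 1)! * ((y + n) ^ (m + 2))⁻¹

theorem min_one_mul_add_one_le {r x : ℝ} (hrx : r ≤ x) (n : ℕ) :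
    min r 1 * (n + 1) ≤ x + n := by
  have := min_le_left r 1
  have := min_le_right r 1
  nlinarith [(n.cast_nonneg : (0 : ℝ) ≤ n)]

theorem inv_add_pow_le {r x : ℝ} (hr : 0 < r) (hrx : r ≤ x) {p : ℕ} (hp : 2 ≤ p) (n : ℕ) :
    ((x + n) ^ p)⁻¹ ≤ ((min r 1) ^ p)⁻¹ * (((n : ℝ) + 1) ^ 2)⁻¹ := by
  have hn : (1 : ℝ) ≤ n + 1 := by simp
  rw [← mul_inv]
  refine inv_anti₀ (by positivity) ?_
  calc min r 1 ^ p * ((n : ℝ) + 1) ^ 2 ≤ min r 1 ^ p * ((n : ℝ) + 1) ^ p := by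
        gcongr
    _ = (min r 1 * (n + 1)) ^ p := (mul_pow ..).symm
    _ ≤ (x + n) ^ p := by
        gcongr
        exact min_one_mul_add_one_le hrx n

theorem summable_inv_add_one_sq : Summable fun n : ℕ => (((n : ℝ) + 1) ^ 2)⁻¹ := by
  have := (summable_nat_add_iff 1).mpr (Real.summable_nat_pow_inv.mpr one_lt_two)
  exact this.congr fun n => by push_cast; rfl

theorem summable_inv_add_pow {x : ℝ} (hx : 0 < x) {p : ℕ} (hp : 2 ≤ p) :
    Summable fun n : ℕ => ((x + n) ^ p)⁻¹ :=
  .of_nonneg_of_le (fun n => by positivity) (inv_add_pow_le hx le_rfl hp)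
    (summable_inv_add_one_sq.mul_left _)

theorem hasDerivAt_polygammaTerm (m n : ℕ) {x : ℝ} (hx : 0 < x) :
    HasDerivAt (polygammaTerm m n) (polygammaTerm (m + 1) n x) x := by
  have hxn : x + n ≠ 0 := by positivity
  have hlin := (hasDerivAt_id' x).add_const (n : ℝ)
  cases m with
  | zero =>
    refine (hlin.inv hxn).const_sub _ |>.congr_deriv ?_
    simp only [polygammaTerm]
    field_simp
    simp
  | succ m =>
    refine ((hlin.fun_pow (m + 2)).inv (pow_ne_zero _ hxn)).const_mul
      ((-1) ^ m * ((m + 1).factorial : ℝ)) |>.congr_deriv ?_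
    simp only [polygammaTerm, Nat.factorial_succ (m + 1)]
    push_cast
    field_simp
    ring

theorem abs_polygammaTerm_zero_le {a b x : ℝ} (ha : 0 < a) (hax : a ≤ x) (hxb : x ≤ b) (n : ℕ) :
    |polygammaTerm 0 n x| ≤ (b + 1) / min a 1 * (((n : ℝ) + 1) ^ 2)⁻¹ := by
  have hxn : 0 < x + n := by linarith [(n.cast_nonneg : (0 : ℝ) ≤ n)]
  have : polygammaTerm 0 n x = (x - 1) / ((n + 1) * (x + n)) := by
    simp only [polygammaTerm]
    field_simp
    ring
  have hmin : 0 < min a 1 := lt_min ha one_pos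
  rw [this, abs_div, abs_of_pos (show (0 : ℝ) < (n + 1) * (x + n) by positivity),
    show (b + 1) / min a 1 * (((n : ℝ) + 1) ^ 2)⁻¹ = (b + 1) / ((n + 1) * (min a 1 * (n + 1))) by
      field_simp]
  gcongr
  · linarith
  · exact abs_le.mpr ⟨by linarith, by linarith⟩
  · exact min_one_mul_add_one_le hax n

theorem abs_polygammaTerm_succ_le {r x : ℝ} (hr : 0 < r) (hrx : r ≤ x) (m n : ℕ) :
    |polygammaTerm (m + 1) n x| ≤
      (m + 1).factorial * ((min r 1 ^ (m + 2))⁻¹ * (((n : ℝ) + 1) ^ 2)⁻¹) := by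
  have hxn : 0 < x + n := by linarith [(n.cast_nonneg : (0 : ℝ) ≤ n)]
  simp only [polygammaTerm, abs_mul, abs_pow, abs_neg, abs_one, one_pow, one_mul, Nat.abs_cast,
    abs_inv, abs_of_pos (pow_pos hxn _)]
  gcongr
  exact inv_add_pow_le hr hrx (by omega) n

theorem sq_tsum_inv_add_pow_lt {x : ℝ} (hx : 0 < x) {p : ℕ} (hp : 2 ≤ p) :
    (∑' n : ℕ, ((x + n) ^ (p + 1))⁻¹) ^ 2 <
      (∑' n : ℕ, ((x + n) ^ (p + 2))⁻¹) * ∑' n : ℕ, ((x + n) ^ p)⁻¹ := by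
  have h₁ (n : ℕ) : (x + n)⁻¹ * ((x + n) ^ p)⁻¹ = ((x + n) ^ (p + 1))⁻¹ := by
    rw [← mul_inv, pow_succ']
  have h₂ (n : ℕ) : (x + n)⁻¹ ^ 2 * ((x + n) ^ p)⁻¹ = ((x + n) ^ (p + 2))⁻¹ := by
    rw [inv_pow, ← mul_inv, ← pow_add, add_comm 2 p]
  have := sq_tsum_mul_lt_tsum_sq_mul_mul_tsum (t := fun n : ℕ => (x + n)⁻¹) (i := 0) (j := 1)
    (fun n => by positivity) (by positivity) (by positivity) (by norm_num)
    (summable_inv_add_pow hx hp) (by simpa only [h₁] using summable_inv_add_pow hx (by omega))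
    (by simpa only [h₂] using summable_inv_add_pow hx (by omega))
  simpa only [h₁, h₂] using this

open Nat in
theorem sq_factorial_mul_tsum_inv_add_pow_lt {x : ℝ} (hx : 0 < x) {k : ℕ} (hk : 1 ≤ k) :
    ((k + 1)! * ∑' n : ℕ, ((x + n) ^ (k + 2))⁻¹) ^ 2 <
      ((k + 2)! * ∑' n : ℕ, ((x + n) ^ (k + 3))⁻¹) * (k ! * ∑' n : ℕ, ((x + n) ^ (k + 1))⁻¹) := by
  have hfact : (k + 1)! ^ 2 ≤ (k + 2)! * k ! :=
    calc (k + 1)! ^ 2 = (k + 1) * ((k + 1)! * k !) := by rw [factorial_succ k]; ring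
      _ ≤ (k + 2) * ((k + 1)! * k !) := by gcongr; omega
      _ = (k + 2)! * k ! := by rw [factorial_succ (k + 1)]; ring
  have hS : 0 ≤ (∑' n : ℕ, ((x + n) ^ (k + 3))⁻¹) * ∑' n : ℕ, ((x + n) ^ (k + 1))⁻¹ :=
    mul_nonneg (tsum_nonneg fun n => by positivity) (tsum_nonneg fun n => by positivity)
  calc ((k + 1)! * ∑' n : ℕ, ((x + n) ^ (k + 2))⁻¹) ^ 2
      = ((k + 1)! : ℝ) ^ 2 * (∑' n : ℕ, ((x + n) ^ (k + 2))⁻¹) ^ 2 := by ring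
    _ < ((k + 1)! : ℝ) ^ 2 *
        ((∑' n : ℕ, ((x + n) ^ (k + 3))⁻¹) * ∑' n : ℕ, ((x + n) ^ (k + 1))⁻¹) := by
      gcongr
      exact sq_tsum_inv_add_pow_lt hx (by omega)
    _ ≤ ((k + 2)! * k ! : ℝ) *
        ((∑' n : ℕ, ((x + n) ^ (k + 3))⁻¹) * ∑' n : ℕ, ((x + n) ^ (k + 1))⁻¹) := by
      gcongr
      exact_mod_cast hfact
    _ = _ := by ring

open Nat in
theorem hasAlternatingLogConvexDerivs_of_eqOn_polygammaSeries {f : ℝ → ℝ} {C : ℝ}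
    (hf : EqOn f (fun y => C + ∑' n, polygammaTerm 0 n y) (Ioi 0)) :
    HasAlternatingLogConvexDerivs f := by
  have hg (m n) (x : ℝ) (hx : x > 0) := hasDerivAt_polygammaTerm m n hx
  have hg₀ : ∀ x > 0, Summable fun n => polygammaTerm 0 n x := fun x hx =>
    .of_norm_bounded (summable_inv_add_one_sq.mul_left _) fun n =>
      abs_polygammaTerm_zero_le hx le_rfl le_rfl n
  have hbound : ∀ m, ∀ r > 0, ∃ u : ℕ → ℝ, Summable u ∧
      ∀ n, ∀ x ≥ r, |polygammaTerm (m + 1) n x| ≤ u n := fun m r hr =>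
    ⟨_, (summable_inv_add_one_sq.mul_left _).mul_left _, fun n x hx =>
      abs_polygammaTerm_succ_le hr hx m n⟩
  have hf' : EqOn f (fun y => C + 0 * y + ∑' n, polygammaTerm 0 n y) (Ioi 0) := fun y hy => by
    simp [hf hy]
  refine ⟨fun k hk x hx => differentiableAt_iteratedDeriv_of_eqOn_tsum hg hg₀ hbound hf' hk hx,
    fun k x => k ! * ∑' n : ℕ, ((x + n) ^ (k + 1))⁻¹, fun k hk x hx => ⟨?_, ?_, ?_⟩⟩
  · rw [eqOn_iteratedDeriv_of_eqOn_tsum hg hg₀ hbound hf' hk hx]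
    obtain ⟨m, rfl⟩ : ∃ m, k = m + 1 := ⟨k - 1, by omega⟩
    simp only [polygammaTerm, ite_self, zero_add, tsum_mul_left]
    ring
  · have := (summable_inv_add_pow hx (p := k + 1) (by omega)).tsum_pos
      (fun n => by positivity) 0 (by positivity)
    positivity
  · exact sq_factorial_mul_tsum_inv_add_pow_lt hx hk

theorem hasDerivAt_logGammaSeq (N : ℕ) {x : ℝ} (hx : 0 < x) :
    HasDerivAt (fun y => BohrMollerup.logGammaSeq y N)
      (log N - ∑ j ∈ Finset.range (N + 1), (x + j)⁻¹) x := by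
  have hlog := HasDerivAt.fun_sum fun j (_ : j ∈ Finset.range (N + 1)) =>
    ((hasDerivAt_id' x).add_const (j : ℝ)).log (by positivity)
  simpa [BohrMollerup.logGammaSeq, div_eq_inv_mul] using
    ((hasDerivAt_mul_const (log N)).add_const (log N.factorial)).fun_sub hlog

theorem log_sub_sum_inv_eq (N : ℕ) (x : ℝ) :
    log N - ∑ j ∈ Finset.range (N + 1), (x + j)⁻¹ =
      (log N - harmonic (N + 1)) + ∑ j ∈ Finset.range (N + 1), polygammaTerm 0 j x := by
  simp only [polygammaTerm, Finset.sum_sub_distrib, harmonic]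
  push_cast
  ring

theorem tendsto_log_sub_harmonic_succ :
    Tendsto (fun N : ℕ => log N - harmonic (N + 1)) atTop (𝓝 (-eulerMascheroniConstant)) := by
  have := ((tendsto_harmonic_sub_log.comp (tendsto_add_atTop_nat 1)).add
    tendsto_log_nat_add_one_sub_log).neg
  rw [add_zero] at this
  refine this.congr fun N => ?_
  simp only [Function.comp_apply]
  push_cast
  ring

theorem tendstoLocallyUniformlyOn_deriv_logGammaSeq :
    TendstoLocallyUniformlyOn (fun (N : ℕ) (x : ℝ) => log N - ∑ j ∈ Finset.range (N + 1), (x + j)⁻¹)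
      (fun x => -eulerMascheroniConstant + ∑' n, polygammaTerm 0 n x) atTop (Ioi 0) := by
  refine tendstoLocallyUniformlyOn_of_forall_exists_nhds fun x (hx : 0 < x) =>
    ⟨Icc (x / 2) (x + 1), mem_nhdsWithin_of_mem_nhds (Icc_mem_nhds (by linarith) (by linarith)), ?_⟩
  have hpart : TendstoUniformlyOn (fun N y => ∑ j ∈ Finset.range (N + 1), polygammaTerm 0 j y)
      (fun y => ∑' j, polygammaTerm 0 j y) atTop (Icc (x / 2) (x + 1)) := fun v hv =>
    (tendsto_add_atTop_nat 1).eventually (tendstoUniformlyOn_tsum_nat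
      (summable_inv_add_one_sq.mul_left _)
      (fun n y hy => abs_polygammaTerm_zero_le (half_pos hx) hy.1 hy.2 n) v hv)
  refine ((tendsto_log_sub_harmonic_succ.tendstoUniformlyOn_const _).add hpart).congr ?_
  filter_upwards with N y _ using (log_sub_sum_inv_eq N y).symm

theorem hasDerivAt_log_Gamma {x : ℝ} (hx : 0 < x) :
    HasDerivAt (fun y => log (Gamma y)) (-eulerMascheroniConstant + ∑' n, polygammaTerm 0 n x) x :=
  hasDerivAt_of_tendstoLocallyUniformlyOn isOpen_Ioi tendstoLocallyUniformlyOn_deriv_logGammaSeq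
    (.of_forall fun N _ hy => hasDerivAt_logGammaSeq N hy)
    (fun _ hy => BohrMollerup.tendsto_log_gamma hy) hx

theorem hasAlternatingLogConvexDerivs_qDigamma {q : ℝ} (hq : 0 < q) :
    HasAlternatingLogConvexDerivs (qDigamma q) := by
  rcases lt_trichotomy q 1 with hq₁ | rfl | hq₁
  · exact hasAlternatingLogConvexDerivs_of_eqOn_lambertSeries (C := -log (1 - q)) hq hq₁
      (log_neg hq hq₁) le_rfl fun y _ => by simp [qDigamma, hq₁]
  · refine hasAlternatingLogConvexDerivs_of_eqOn_polygammaSeries (C := -eulerMascheroniConstant)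
      fun y (hy : 0 < y) => ?_
    simpa [qDigamma] using (hasDerivAt_log_Gamma hy).deriv
  · refine hasAlternatingLogConvexDerivs_of_eqOn_lambertSeries (C := -log (q - 1) - log q / 2)
      (inv_pos.mpr hq) (inv_lt_one_of_one_lt₀ hq₁) (neg_neg_of_pos (log_pos hq₁))
      (log_pos hq₁).le fun y _ => ?_
    simp only [qDigamma, if_neg hq₁.not_gt, if_pos hq₁, inv_rpow hq.le, ← rpow_neg hq.le]
    ring

/-- For every `q > 0`, `k ≥ 1` and `x > 0`,
`ψ_q^{(k+2)}(x)·ψ_q^{(k)}(x) - (ψ_q^{(k+1)}(x))² > 0`; consequently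
`ψ_q^{(k+1)}/ψ_q^{(k)}` is increasing on `(0,∞)`. -/
theorem iteratedDeriv_qDigamma_ratio_strictMonoOn (q : ℝ) (hq : 0 < q) (k : ℕ) (hk : 1 ≤ k) :
    (∀ x : ℝ, 0 < x →
      iteratedDeriv (k + 2) (qDigamma q) x * iteratedDeriv k (qDigamma q) x -
        (iteratedDeriv (k + 1) (qDigamma q) x) ^ 2 > 0) ∧
    StrictMonoOn
      (fun x : ℝ => iteratedDeriv (k + 1) (qDigamma q) x / iteratedDeriv k (qDigamma q) x)
      (Set.Ioi 0) := by
  have h := hasAlternatingLogConvexDerivs_qDigamma hq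
  exact ⟨fun x hx => sub_pos.mpr (h.turan hk hx), h.strictMonoOn_div hk⟩
end

section
/- For every q with 0 < q < 1 and every x > 0 with x ≠ 1, one has ψ_q(x) + ψ_q(1/x) < 2·ψ_q(1). -/
open Real

/-!
For `0 < q < 1` write `ψ_q = -log (1 - q) + log q · S` with
`S y = ∑_{n ≥ 1} q^{ny}/(1 - q^n)`. Since `log q < 0` the claim is `S x + S (1/x) > 2 S 1`, and
as `Ψ y = S y + S (1/y)` is symmetric under `y ↦ 1/y` it suffices that `Ψ` is strictly increasing
on `[1, ∞)`. With `A = -S' / log q = ∑ n q^{ny}/(1 - q^n)` this says that `y ↦ y A y` is strictly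
decreasing, i.e. `A y + y log q · B y < 0` for `B = ∑ n² q^{ny}/(1 - q^n)`. As
`y log q = log (q^y) < q^y - 1`, it is enough that `A ≤ (1 - q^y) B`, which holds coefficientwise
in `q^y` because `n ↦ (1 - q^n)/n` is decreasing. Below `S`, `A`, `B` are `qSeries q k` for
`k = 0, 1, 2`.
-/

open Set

noncomputable def qTerm (q : ℝ) (k : ℕ) (y : ℝ) (n : ℕ) : ℝ :=
  ((n : ℝ) + 1) ^ k * q ^ (((n : ℝ) + 1) * y) / (1 - q ^ (n + 1))

noncomputable def qSeries (q : ℝ) (k : ℕ) (y : ℝ) : ℝ :=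
  ∑' n, qTerm q k y n

lemma nat_mul_one_sub_pow_succ_le {q : ℝ} (hq : 0 ≤ q) (n : ℕ) :
    n * (1 - q ^ (n + 1)) ≤ (n + 1) * (1 - q ^ n) := by
  induction n with
  | zero => simp
  | succ m ih =>
    have : 0 ≤ ((m : ℝ) + 1) * q ^ m * (1 - q) ^ 2 := by positivity
    push_cast
    linear_combination ih + this

lemma rpow_natCast_add_one_mul {q : ℝ} (hq : 0 ≤ q) (n : ℕ) (y : ℝ) :
    q ^ (((n : ℝ) + 1) * y) = (q ^ y) ^ (n + 1) := by
  rw [mul_comm, rpow_mul hq, ← Nat.cast_add_one, rpow_natCast]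

section Series

variable {q : ℝ}

lemma one_sub_pow_succ_pos (hq0 : 0 ≤ q) (hq1 : q < 1) (n : ℕ) : 0 < 1 - q ^ (n + 1) :=
  sub_pos.2 (pow_lt_one₀ hq0 hq1 n.succ_ne_zero)

lemma qTerm_nonneg (hq0 : 0 ≤ q) (hq1 : q < 1) (k : ℕ) (y : ℝ) (n : ℕ) :
    0 ≤ qTerm q k y n :=
  div_nonneg (by positivity) (one_sub_pow_succ_pos hq0 hq1 n).le

lemma qTerm_antitone (hq0 : 0 < q) (hq1 : q < 1) (k n : ℕ) :
    Antitone fun y => qTerm q k y n := fun y z hyz =>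
  div_le_div_of_nonneg_right
    (mul_le_mul_of_nonneg_left (rpow_le_rpow_of_exponent_ge hq0 hq1.le (by gcongr))
      (by positivity))
    (one_sub_pow_succ_pos hq0.le hq1 n).le

lemma summable_qTerm (hq0 : 0 < q) (hq1 : q < 1) (k : ℕ) {y : ℝ} (hy : 0 < y) :
    Summable (qTerm q k y) := by
  have hr : ‖q ^ y‖ < 1 := by
    rw [norm_of_nonneg (rpow_nonneg hq0.le y)]
    exact rpow_lt_one hq0.le hq1 hy
  have hgeom : Summable fun n : ℕ => ((n : ℝ) + 1) ^ k * (q ^ y) ^ (n + 1) / (1 - q) := by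
    have h := (summable_nat_add_iff (f := fun n : ℕ => (n : ℝ) ^ k * (q ^ y) ^ n) 1).2
      (summable_pow_mul_geometric_of_norm_lt_one k hr)
    refine (h.congr fun n => ?_).div_const _
    push_cast
    rfl
  refine hgeom.of_nonneg_of_le (qTerm_nonneg hq0.le hq1 k y) fun n => ?_
  have := rpow_nonneg hq0.le y
  rw [qTerm, rpow_natCast_add_one_mul hq0.le]
  gcongr
  exact pow_le_of_le_one hq0.le hq1.le n.succ_ne_zero

lemma qSeries_pos (hq0 : 0 < q) (hq1 : q < 1) (k : ℕ) {y : ℝ} (hy : 0 < y) :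
    0 < qSeries q k y :=
  (summable_qTerm hq0 hq1 k hy).tsum_pos (qTerm_nonneg hq0.le hq1 k y) 0
    (div_pos (by positivity) (one_sub_pow_succ_pos hq0.le hq1 0))

lemma hasDerivAt_qTerm (hq0 : 0 < q) (k n : ℕ) (y : ℝ) :
    HasDerivAt (fun y => qTerm q k y n) (log q * qTerm q (k + 1) y n) y := by
  have h := (hasStrictDerivAt_const_rpow hq0 _).hasDerivAt.comp y
    ((hasDerivAt_id y).const_mul ((n : ℝ) + 1))
  refine ((h.const_mul (((n : ℝ) + 1) ^ k)).div_const (1 - q ^ (n + 1))).congr_deriv ?_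
  simp only [qTerm, id, mul_one]
  ring

lemma hasDerivAt_qSeries (hq0 : 0 < q) (hq1 : q < 1) (k : ℕ) {y : ℝ} (hy : 0 < y) :
    HasDerivAt (qSeries q k) (log q * qSeries q (k + 1) y) y := by
  have hlog : log q ≤ 0 := log_nonpos hq0.le hq1.le
  have h := hasDerivAt_tsum_of_isPreconnected (t := Ioi (y / 2)) (y₀ := y)
    ((summable_qTerm hq0 hq1 (k + 1) (half_pos hy)).mul_left (-log q)) isOpen_Ioi
    isPreconnected_Ioi (fun n z _ => hasDerivAt_qTerm hq0 k n z) (fun n z hz => ?_)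
    (half_lt_self hy) (summable_qTerm hq0 hq1 k hy) (half_lt_self hy)
  · rwa [tsum_mul_left] at h
  · rw [norm_mul, norm_of_nonpos hlog, norm_of_nonneg (qTerm_nonneg hq0.le hq1 _ z n)]
    exact mul_le_mul_of_nonneg_left (qTerm_antitone hq0 hq1 _ n (le_of_lt hz)) (neg_nonneg.2 hlog)

lemma qTerm_one_succ_add_le (hq0 : 0 < q) (hq1 : q < 1) (y : ℝ) (n : ℕ) :
    qTerm q 1 y (n + 1) + q ^ y * qTerm q 2 y n ≤ qTerm q 2 y (n + 1) := by
  have hd₁ := one_sub_pow_succ_pos hq0.le hq1 n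
  have hd₂ : 0 < 1 - q ^ (n + 2) := one_sub_pow_succ_pos hq0.le hq1 (n + 1)
  have hcoeff : ((n : ℝ) + 2) / (1 - q ^ (n + 2)) + ((n : ℝ) + 1) ^ 2 / (1 - q ^ (n + 1))
      ≤ ((n : ℝ) + 2) ^ 2 / (1 - q ^ (n + 2)) := by
    have h := nat_mul_one_sub_pow_succ_le hq0.le (n + 1)
    push_cast at h
    rw [← le_sub_iff_add_le', ← sub_div, div_le_div_iff₀ hd₁ hd₂]
    linear_combination ((n : ℝ) + 1) * h
  simp only [qTerm, rpow_natCast_add_one_mul hq0.le]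
  push_cast
  calc _ = (q ^ y) ^ (n + 2) * (((n : ℝ) + 2) / (1 - q ^ (n + 2))
          + ((n : ℝ) + 1) ^ 2 / (1 - q ^ (n + 1))) := by ring
    _ ≤ (q ^ y) ^ (n + 2) * (((n : ℝ) + 2) ^ 2 / (1 - q ^ (n + 2))) := by gcongr
    _ = _ := by ring

lemma qSeries_one_le (hq0 : 0 < q) (hq1 : q < 1) {y : ℝ} (hy : 0 < y) :
    qSeries q 1 y ≤ (1 - q ^ y) * qSeries q 2 y := by
  have hA := summable_qTerm hq0 hq1 1 hy
  have hB := summable_qTerm hq0 hq1 2 hy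
  have hshift :
      ∑' n, qTerm q 1 y (n + 1) + q ^ y * qSeries q 2 y ≤ ∑' n, qTerm q 2 y (n + 1) := by
    rw [qSeries, ← tsum_mul_left, ← ((summable_nat_add_iff 1).2 hA).tsum_add (hB.mul_left _)]
    exact Summable.tsum_le_tsum (qTerm_one_succ_add_le hq0 hq1 y)
      (((summable_nat_add_iff 1).2 hA).add (hB.mul_left _)) ((summable_nat_add_iff 1).2 hB)
  have h0 : qTerm q 1 y 0 = qTerm q 2 y 0 := by simp [qTerm]
  have eA : qSeries q 1 y = qTerm q 1 y 0 + ∑' n, qTerm q 1 y (n + 1) := hA.tsum_eq_zero_add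
  have eB : qSeries q 2 y = qTerm q 2 y 0 + ∑' n, qTerm q 2 y (n + 1) := hB.tsum_eq_zero_add
  rw [sub_mul, one_mul]
  linarith

end Series

section Monotonicity

variable {q : ℝ}

lemma strictAntiOn_mul_qSeries_one (hq0 : 0 < q) (hq1 : q < 1) :
    StrictAntiOn (fun y => y * qSeries q 1 y) (Ioi 0) := by
  have hderiv : ∀ y ∈ Ioi (0 : ℝ), HasDerivAt (fun y => y * qSeries q 1 y)
      (qSeries q 1 y + y * (log q * qSeries q 2 y)) y := fun y hy =>
    ((hasDerivAt_id' y).mul (hasDerivAt_qSeries hq0 hq1 1 hy)).congr_deriv (by rw [one_mul])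
  refine strictAntiOn_of_hasDerivWithinAt_neg (convex_Ioi 0)
    (fun y hy => (hderiv y hy).continuousAt.continuousWithinAt)
    (fun y hy => (hderiv y (interior_subset hy)).hasDerivWithinAt) fun y hy => ?_
  rw [interior_Ioi] at hy
  have hlog : y * log q < q ^ y - 1 := by
    rw [← log_rpow hq0]
    exact log_lt_sub_one_of_pos (rpow_pos_of_pos hq0 y) (rpow_lt_one hq0.le hq1 hy).ne
  have := mul_lt_mul_of_pos_right hlog (qSeries_pos hq0 hq1 2 hy)
  have := qSeries_one_le hq0 hq1 hy
  linarith

lemma strictMonoOn_qSeries_zero_add_inv (hq0 : 0 < q) (hq1 : q < 1) :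
    StrictMonoOn (fun y => qSeries q 0 y + qSeries q 0 y⁻¹) (Ici 1) := by
  have hderiv : ∀ y ∈ Ici (1 : ℝ), HasDerivAt (fun y => qSeries q 0 y + qSeries q 0 y⁻¹)
      (log q * qSeries q 1 y + log q * qSeries q 1 y⁻¹ * -(y ^ 2)⁻¹) y := fun y hy => by
    have hy0 : 0 < y := zero_lt_one.trans_le hy
    exact (hasDerivAt_qSeries hq0 hq1 0 hy0).add
      ((hasDerivAt_qSeries hq0 hq1 0 (inv_pos.2 hy0)).comp y (hasDerivAt_inv hy0.ne'))
  refine strictMonoOn_of_hasDerivWithinAt_pos (convex_Ici 1)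
    (fun y hy => (hderiv y hy).continuousAt.continuousWithinAt)
    (fun y hy => (hderiv y (interior_subset hy)).hasDerivWithinAt) fun y hy => ?_
  rw [interior_Ici] at hy
  have hy0 : 0 < y := zero_lt_one.trans hy
  have hanti := strictAntiOn_mul_qSeries_one hq0 hq1 (inv_pos.2 hy0) hy0
    ((inv_lt_one_of_one_lt₀ hy).trans hy)
  have hA : qSeries q 1 y < qSeries q 1 y⁻¹ * (y ^ 2)⁻¹ := by
    calc qSeries q 1 y = y⁻¹ * (y * qSeries q 1 y) := by field_simp
      _ < y⁻¹ * (y⁻¹ * qSeries q 1 y⁻¹) := mul_lt_mul_of_pos_left hanti (inv_pos.2 hy0)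
      _ = qSeries q 1 y⁻¹ * (y ^ 2)⁻¹ := by ring
  linarith [mul_lt_mul_of_neg_left hA (log_neg hq0 hq1)]

lemma two_mul_qSeries_zero_one_lt (hq0 : 0 < q) (hq1 : q < 1) {x : ℝ} (hx : 0 < x)
    (hx1 : x ≠ 1) : 2 * qSeries q 0 1 < qSeries q 0 x + qSeries q 0 x⁻¹ := by
  have hmono := strictMonoOn_qSeries_zero_add_inv hq0 hq1
  rcases hx1.lt_or_gt with hlt | hgt
  · have := hmono self_mem_Ici (one_le_inv₀ hx |>.2 hlt.le) ((one_lt_inv₀ hx).2 hlt)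
    simp only [inv_one, inv_inv] at this
    linarith
  · have := hmono self_mem_Ici hgt.le hgt
    simp only [inv_one] at this
    linarith

end Monotonicity

lemma qDigamma_eq_of_lt_one {q : ℝ} (hq1 : q < 1) (y : ℝ) :
    qDigamma q y = -log (1 - q) + log q * qSeries q 0 y := by
  simp only [qDigamma, if_pos hq1, qSeries, qTerm, pow_zero, one_mul, ← Nat.cast_add_one,
    rpow_natCast]

/-- For every `0 < q < 1` and every `x > 0` with `x ≠ 1`,
`ψ_q(x) + ψ_q(1/x) < 2·ψ_q(1)`. -/
theorem qDigamma_add_inv_lt (q : ℝ) (hq0 : 0 < q) (hq1 : q < 1)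
    (x : ℝ) (hx : 0 < x) (hx1 : x ≠ 1) :
    qDigamma q x + qDigamma q (1 / x) < 2 * qDigamma q 1 := by
  simp only [qDigamma_eq_of_lt_one hq1, one_div]
  linarith [mul_lt_mul_of_neg_left (two_mul_qSeries_zero_one_lt hq0 hq1 hx hx1) (log_neg hq0 hq1)]
end

section
/- For every q > 1 and every x > 0 with x ≠ 1, one has ψ_q(x) + ψ_q(1/x) < ((x−1)²/x)·log q + 2·ψ_q(1). -/
/-!
Put `a = log q`. Then `ψ_q(x) = -log (q - 1) + a (x - 1/2 - S(x))` with
`S(t) = ∑_{n ≥ 1} e^{-a n t} / (1 - e^{-a n})`, and `(x - 1)² / x = x + 1/x - 2`, so the claim is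
`S(x) + S(1/x) > 2 S(1)`. This holds because `t ↦ S(t) + S(1/t)` is strictly increasing on `[1, ∞)`:
its derivative is `t⁻¹ (t⁻¹ T(1/t) - t T(t))` with `T = -S'`. Writing `T(t) = ∑ C(b) e^{-b t}` over
`b = a n`, where `C(b) = b / (1 - e^{-b})` is increasing, the factor `t e^{-b t} - t⁻¹ e^{-b/t}` of
`t T(t) - t⁻¹ T(1/t)` is nonnegative exactly for `b ≤ θ = 2 log t / (t - 1/t)`. Hence that difference is
at most `C(θ) ∑ (t e^{-b t} - t⁻¹ e^{-b/t})`, a geometric sum which is negative because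
`u ↦ u / (eᵘ - 1)` is decreasing.
-/

open Real

open Set

lemma exp_sub_one_div_lt_exp_sub_one_div {u v : ℝ} (hu : u ≠ 0) (hv : v ≠ 0) (huv : u < v) :
    (exp u - 1) / u < (exp v - 1) / v := by
  simpa using strictConvexOn_exp.secant_strict_mono (mem_univ 0) (mem_univ u) (mem_univ v) hu hv huv

lemma div_exp_sub_one_strictAntiOn : StrictAntiOn (fun u : ℝ => u / (exp u - 1)) (Ioi 0) := by
  intro u (hu : 0 < u) v (hv : 0 < v) huv
  have hslope := exp_sub_one_div_lt_exp_sub_one_div hu.ne' hv.ne' huv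
  have hpos : 0 < (exp u - 1) / u := div_pos (by linarith [add_one_lt_exp hu.ne']) hu
  simpa only [one_div_div] using one_div_lt_one_div_of_lt hpos hslope

lemma div_one_sub_exp_neg_monotoneOn : MonotoneOn (fun u : ℝ => u / (1 - exp (-u))) (Ioi 0) := by
  intro u (hu : 0 < u) v (hv : 0 < v) huv
  rcases huv.eq_or_lt with rfl | huv
  · rfl
  have hslope := exp_sub_one_div_lt_exp_sub_one_div (neg_ne_zero.2 hv.ne') (neg_ne_zero.2 hu.ne')
    (neg_lt_neg huv)
  have hpos : 0 < (exp (-v) - 1) / -v :=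
    div_pos_of_neg_of_neg (by linarith [exp_lt_one_iff.2 (neg_lt_zero.2 hv)]) (neg_lt_zero.2 hv)
  have := one_div_le_one_div_of_le hpos hslope.le
  simp only [one_div_div, neg_div, ← div_neg, neg_sub] at this ⊢
  exact this

variable {a t : ℝ}

lemma hasSum_exp_neg_mul_succ (ha : 0 < a) (ht : 0 < t) :
    HasSum (fun n : ℕ => exp (-(a * (n + 1)) * t)) (1 / (exp (a * t) - 1)) := by
  have hr : exp (-(a * t)) < 1 := exp_lt_one_iff.2 (by nlinarith)
  have hterm : ∀ n : ℕ, exp (-(a * (n + 1)) * t) = exp (-(a * t)) * exp (-(a * t)) ^ n :=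
    fun n => by rw [← pow_succ', ← exp_nat_mul]; push_cast; ring_nf
  have hsum : exp (-(a * t)) * (1 - exp (-(a * t)))⁻¹ = 1 / (exp (a * t) - 1) := by
    have : exp (a * t) ≠ 1 := (one_lt_exp_iff.2 (by positivity)).ne'
    rw [exp_neg]
    field_simp
  rw [funext hterm, ← hsum]
  exact (hasSum_geometric_of_lt_one (exp_pos _).le hr).mul_left _

lemma summable_mul_succ_mul_exp_neg (ha : 0 < a) (ht : 0 < t) :
    Summable (fun n : ℕ => a * (n + 1) * exp (-(a * (n + 1)) * t)) := by
  have h := ((summable_nat_add_iff 1).2 (summable_pow_mul_exp_neg_nat_mul 1 (mul_pos ha ht))).mul_left a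
  refine h.congr fun n => ?_
  push_cast; ring_nf

lemma one_sub_exp_neg_le (ha : 0 ≤ a) (n : ℕ) :
    1 - exp (-a) ≤ 1 - exp (-(a * (n + 1))) := by
  have : a ≤ a * (n + 1) := le_mul_of_one_le_right ha (by simp)
  linarith [exp_le_exp.2 (neg_le_neg this)]

lemma summable_div_one_sub_exp_neg {f : ℕ → ℝ} (ha : 0 < a) (hf : Summable f)
    (hf0 : ∀ n, 0 ≤ f n) : Summable (fun n : ℕ => f n / (1 - exp (-(a * (n + 1))))) := by
  have hden : 0 < 1 - exp (-a) := by linarith [exp_lt_one_iff.2 (neg_lt_zero.2 ha)]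
  refine (hf.div_const (1 - exp (-a))).of_nonneg_of_le (fun n => ?_) (fun n => ?_)
  · exact div_nonneg (hf0 n) (hden.trans_le (one_sub_exp_neg_le ha.le n)).le
  · exact div_le_div_of_nonneg_left (hf0 n) hden (one_sub_exp_neg_le ha.le n)

noncomputable def qDigammaSeries (a t : ℝ) : ℝ :=
  ∑' n : ℕ, exp (-(a * (n + 1)) * t) / (1 - exp (-(a * (n + 1))))

noncomputable def negDerivQDigammaSeries (a t : ℝ) : ℝ :=
  ∑' n : ℕ, a * (n + 1) * exp (-(a * (n + 1)) * t) / (1 - exp (-(a * (n + 1))))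

lemma summable_qDigammaSeries (ha : 0 < a) (ht : 0 < t) :
    Summable (fun n : ℕ => exp (-(a * (n + 1)) * t) / (1 - exp (-(a * (n + 1))))) :=
  summable_div_one_sub_exp_neg ha (hasSum_exp_neg_mul_succ ha ht).summable fun _ => (exp_pos _).le

lemma summable_negDerivQDigammaSeries (ha : 0 < a) (ht : 0 < t) :
    Summable (fun n : ℕ => a * (n + 1) * exp (-(a * (n + 1)) * t) / (1 - exp (-(a * (n + 1))))) :=
  summable_div_one_sub_exp_neg ha (summable_mul_succ_mul_exp_neg ha ht) fun _ => by positivity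

lemma hasDerivAt_qDigammaSeries (ha : 0 < a) (ht : 0 < t) :
    HasDerivAt (qDigammaSeries a) (-negDerivQDigammaSeries a t) t := by
  have hterm : ∀ (n : ℕ) (y : ℝ), HasDerivAt
      (fun z => exp (-(a * (n + 1)) * z) / (1 - exp (-(a * (n + 1)))))
      (-(a * (n + 1) * exp (-(a * (n + 1)) * y) / (1 - exp (-(a * (n + 1)))))) y := fun n y => by
    refine (((hasDerivAt_id' y).const_mul _).exp.div_const _).congr_deriv ?_
    ring
  have hbound : ∀ (n : ℕ), ∀ y ∈ Ioi (t / 2),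
      ‖-(a * (n + 1) * exp (-(a * (n + 1)) * y) / (1 - exp (-(a * (n + 1)))))‖ ≤
        a * (n + 1) * exp (-(a * (n + 1)) * (t / 2)) / (1 - exp (-(a * (n + 1)))) := by
    intro n y (hy : t / 2 < y)
    have hb : 0 < a * (n + 1) := by positivity
    have hden : 0 < 1 - exp (-(a * (n + 1))) := sub_pos.2 (exp_lt_one_iff.2 (by linarith))
    rw [norm_neg, Real.norm_of_nonneg (by positivity)]
    have hexp : exp (-(a * (n + 1)) * y) ≤ exp (-(a * (n + 1)) * (t / 2)) :=
      exp_le_exp.2 (by nlinarith)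
    gcongr
  have hmem : t / 2 < t := half_lt_self ht
  have h := hasDerivAt_tsum_of_isPreconnected (summable_negDerivQDigammaSeries ha (half_pos ht))
    isOpen_Ioi isPreconnected_Ioi (fun n y _ => hterm n y) hbound hmem
    (summable_qDigammaSeries ha ht) hmem
  rw [tsum_neg] at h
  exact h

lemma one_div_mul_exp_le_mul_exp_iff (ht : 0 < t) (b : ℝ) :
    1 / t * exp (-b * (1 / t)) ≤ t * exp (-b * t) ↔ b * (t - 1 / t) ≤ 2 * log t := by
  have hl : 1 / t * exp (-b * (1 / t)) = exp (-log t - b * (1 / t)) := by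
    rw [sub_eq_add_neg, exp_add, exp_neg, exp_log ht]; ring_nf
  have hr : t * exp (-b * t) = exp (log t - b * t) := by
    rw [sub_eq_add_neg, exp_add, exp_log ht]; ring_nf
  rw [hl, hr, exp_le_exp]
  constructor <;> intro h <;> linarith

lemma div_one_sub_exp_neg_mul_le {b θ : ℝ} (ht : 1 < t) (hb : 0 < b) (hθ : 0 < θ)
    (hθt : θ * (t - 1 / t) = 2 * log t) :
    b / (1 - exp (-b)) * (t * exp (-b * t) - 1 / t * exp (-b * (1 / t))) ≤
      θ / (1 - exp (-θ)) * (t * exp (-b * t) - 1 / t * exp (-b * (1 / t))) := by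
  have hiff := one_div_mul_exp_le_mul_exp_iff (one_pos.trans ht) b
  have hdist : 0 < t - 1 / t := sub_pos.2 (((div_lt_one (one_pos.trans ht)).2 ht).trans ht)
  rw [← hθt, mul_le_mul_iff_left₀ hdist] at hiff
  rcases le_or_gt b θ with hle | hlt
  · exact mul_le_mul_of_nonneg_right (div_one_sub_exp_neg_monotoneOn hb hθ hle)
      (sub_nonneg.2 (hiff.2 hle))
  · exact mul_le_mul_of_nonpos_right (div_one_sub_exp_neg_monotoneOn hθ hb hlt.le)
      (sub_nonpos.2 (not_le.1 (hiff.not.2 hlt.not_ge)).le)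

lemma div_exp_mul_sub_one_lt (ha : 0 < a) (ht : 1 < t) :
    t / (exp (a * t) - 1) < 1 / t / (exp (a * (1 / t)) - 1) := by
  have ht0 : 0 < t := one_pos.trans ht
  have hw := div_exp_sub_one_strictAntiOn (mul_pos ha (one_div_pos.2 ht0)) (mul_pos ha ht0)
    (mul_lt_mul_of_pos_left (((div_lt_one ht0).2 ht).trans ht) ha)
  simp only [mul_div_assoc] at hw
  exact lt_of_mul_lt_mul_left hw ha.le

lemma mul_negDerivQDigammaSeries_lt (ha : 0 < a) (ht : 1 < t) :
    t * negDerivQDigammaSeries a t < 1 / t * negDerivQDigammaSeries a (1 / t) := by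
  have ht0 : 0 < t := one_pos.trans ht
  have hti : 0 < 1 / t := one_div_pos.2 ht0
  set C : ℝ → ℝ := fun u => u / (1 - exp (-u))
  set h : ℕ → ℝ := fun n => t * exp (-(a * (n + 1)) * t) - 1 / t * exp (-(a * (n + 1)) * (1 / t))
  set θ := 2 * log t / (t - 1 / t)
  have hdist : 0 < t - 1 / t := sub_pos.2 (((div_lt_one ht0).2 ht).trans ht)
  have hθ : 0 < θ := div_pos (by linarith [log_pos ht]) hdist
  have hT := (summable_negDerivQDigammaSeries ha ht0).mul_left t
  have hTi := (summable_negDerivQDigammaSeries ha hti).mul_left (1 / t)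
  have hdiff : t * negDerivQDigammaSeries a t - 1 / t * negDerivQDigammaSeries a (1 / t) =
      ∑' n : ℕ, C (a * (n + 1)) * h n := by
    rw [negDerivQDigammaSeries, negDerivQDigammaSeries, ← tsum_mul_left, ← tsum_mul_left,
      ← hT.tsum_sub hTi]
    congr 1 with n
    ring
  have hCh : Summable (fun n : ℕ => C (a * (n + 1)) * h n) :=
    (hT.sub hTi).congr fun n => by ring
  have hh : HasSum h (t * (1 / (exp (a * t) - 1)) - 1 / t * (1 / (exp (a * (1 / t)) - 1))) :=
    ((hasSum_exp_neg_mul_succ ha ht0).mul_left t).sub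
      ((hasSum_exp_neg_mul_succ ha hti).mul_left (1 / t))
  have hsign (n : ℕ) : C (a * (n + 1)) * h n ≤ C θ * h n :=
    div_one_sub_exp_neg_mul_le ht (by positivity) hθ (div_mul_cancel₀ _ hdist.ne')
  have hgeom : t * (1 / (exp (a * t) - 1)) - 1 / t * (1 / (exp (a * (1 / t)) - 1)) < 0 := by
    simpa only [mul_one_div, sub_neg] using div_exp_mul_sub_one_lt ha ht
  have hCθ : 0 < C θ := div_pos hθ (sub_pos.2 (exp_lt_one_iff.2 (neg_lt_zero.2 hθ)))
  rw [← sub_neg, hdiff]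
  calc ∑' n : ℕ, C (a * (n + 1)) * h n
      ≤ ∑' n : ℕ, C θ * h n :=
        Summable.tsum_le_tsum hsign hCh (hh.summable.mul_left _)
    _ = C θ * (t * (1 / (exp (a * t) - 1)) - 1 / t * (1 / (exp (a * (1 / t)) - 1))) :=
        (hh.mul_left _).tsum_eq
    _ < 0 := mul_neg_of_pos_of_neg hCθ hgeom

lemma qDigammaSeries_add_inv_strictMonoOn (ha : 0 < a) :
    StrictMonoOn (fun t => qDigammaSeries a t + qDigammaSeries a (1 / t)) (Ici 1) := by
  have hderiv : ∀ t, 0 < t → HasDerivAt (fun t => qDigammaSeries a t + qDigammaSeries a (1 / t))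
      (-negDerivQDigammaSeries a t + negDerivQDigammaSeries a (1 / t) * (t ^ 2)⁻¹) t := by
    intro t ht
    have hinv : HasDerivAt (fun y : ℝ => 1 / y) (-(t ^ 2)⁻¹) t := by
      simpa only [one_div] using hasDerivAt_inv ht.ne'
    refine ((hasDerivAt_qDigammaSeries ha ht).add
      ((hasDerivAt_qDigammaSeries ha (one_div_pos.2 ht)).comp t hinv)).congr_deriv ?_
    ring
  refine strictMonoOn_of_hasDerivWithinAt_pos (convex_Ici 1)
    (fun t ht => (hderiv t (one_pos.trans_le ht)).continuousAt.continuousWithinAt)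
    (fun t ht => (hderiv t ?_).hasDerivWithinAt) fun t ht => ?_
  all_goals rw [interior_Ici] at ht
  · exact one_pos.trans ht
  · have ht0 : 0 < t := one_pos.trans ht
    have hlt := mul_negDerivQDigammaSeries_lt ha ht
    have : -negDerivQDigammaSeries a t + negDerivQDigammaSeries a (1 / t) * (t ^ 2)⁻¹ =
        1 / t * (1 / t * negDerivQDigammaSeries a (1 / t) - t * negDerivQDigammaSeries a t) := by
      field_simp
      ring
    rw [this]
    exact mul_pos (one_div_pos.2 ht0) (sub_pos.2 hlt)

lemma two_mul_qDigammaSeries_one_lt {x : ℝ} (ha : 0 < a) (hx : 0 < x) (hx1 : x ≠ 1) :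
    2 * qDigammaSeries a 1 < qDigammaSeries a x + qDigammaSeries a (1 / x) := by
  have hmono := qDigammaSeries_add_inv_strictMonoOn ha
  have h1 : qDigammaSeries a 1 + qDigammaSeries a (1 / 1) = 2 * qDigammaSeries a 1 := by
    rw [div_one, two_mul]
  rcases hx1.lt_or_gt with hlt | hgt
  · have hinv : 1 < 1 / x := one_lt_one_div hx hlt
    have := hmono self_mem_Ici hinv.le hinv
    simp only [h1, one_div_one_div] at this
    linarith
  · have := hmono self_mem_Ici hgt.le hgt
    simpa only [h1] using this

lemma qDigamma_of_one_lt {q : ℝ} (hq : 1 < q) (x : ℝ) :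
    qDigamma q x = -log (q - 1) + log q * (x - 1 / 2 - qDigammaSeries (log q) x) := by
  have hq0 : 0 < q := one_pos.trans hq
  rw [qDigamma, if_neg hq.le.not_gt, if_pos hq, qDigammaSeries]
  congr 3
  refine tsum_congr fun n => ?_
  rw [rpow_def_of_pos hq0, rpow_def_of_pos hq0]
  ring_nf

/-- For every `q > 1` and every `x > 0` with `x ≠ 1`,
`ψ_q(x) + ψ_q(1/x) < ((x-1)²/x)·log q + 2·ψ_q(1)`. -/
theorem qDigamma_add_inv_lt_of_one_lt (q : ℝ) (hq : 1 < q)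
    (x : ℝ) (hx : 0 < x) (hx1 : x ≠ 1) :
    qDigamma q x + qDigamma q (1 / x) <
      (x - 1) ^ 2 / x * Real.log q + 2 * qDigamma q 1 := by
  have ha : 0 < log q := log_pos hq
  have hS := two_mul_qDigammaSeries_one_lt ha hx hx1
  have hsq : (x - 1) ^ 2 / x = x + 1 / x - 2 := by field_simp; ring
  rw [qDigamma_of_one_lt hq, qDigamma_of_one_lt hq, qDigamma_of_one_lt hq, hsq]
  linear_combination mul_pos ha (sub_pos.2 hS)
end
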